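/- arXiv:1609.05087 — 3 statements merged into one kernel-verified Lean document; each statement's English description precedes it below -/
import Mathlib

section
/- Let S and A be finite nonempty sets, P a transition kernel on S × A, c : S × A → ℝ, δ ∈ [0,1), and C* the unique fixed point of the Bellman operator T. If π* : S → A is a greedy policy with respect to C*, i.e., for every s ∈ S, c(s,π*(s)) + δ Σ_{s'∈S} P(s'|s,π*(s)) C*(s') = min_{a∈A} ( c(s,a) + δ Σ_{s'∈S} P(s'|s,a) C*(s') ), then the value C^{π*} of π* (the unique fixed point of T_{π*}) equals C*. In particular, an optimal stationary deterministic policy exists. -/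
open Finset

/-- A policy `π*` that is greedy with respect to the fixed point
`C*` of the Bellman operator is optimal: its value `C^{π*}` equals `C*`. -/
theorem greedy_policy_is_optimal
    {S A : Type*} [Fintype S] [Fintype A] [Nonempty S] [Nonempty A]
    (P : S → A → S → ℝ)
    (hP0 : ∀ s a s', 0 ≤ P s a s')
    (hP1 : ∀ s a, ∑ s', P s a s' = 1)
    (c : S → A → ℝ) (δ : ℝ) (hδ0 : 0 ≤ δ) (hδ1 : δ < 1)
    (Cstar : S → ℝ)
    (hCstar : ∀ s, Cstar s =
      univ.inf' univ_nonempty (fun a => c s a + δ * ∑ s', P s a s' * Cstar s'))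
    (πstar : S → A)
    (hgreedy : ∀ s, c s (πstar s) + δ * ∑ s', P s (πstar s) s' * Cstar s' =
      univ.inf' univ_nonempty (fun a => c s a + δ * ∑ s', P s a s' * Cstar s'))
    (Cπstar : S → ℝ)
    (hCπstar : ∀ s, Cπstar s =
      c s (πstar s) + δ * ∑ s', P s (πstar s) s' * Cπstar s') :
    Cπstar = Cstar := by
  have hfix : ∀ s, Cstar s = c s (πstar s) + δ * ∑ s', P s (πstar s) s' * Cstar s' := by
    intro s; rw [hCstar s, hgreedy s]
  -- D s = Cπstar s - Cstar s satisfies D s = δ * Σ P D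
  set D : S → ℝ := fun s => Cπstar s - Cstar s with hD
  have hDeq : ∀ s, D s = δ * ∑ s', P s (πstar s) s' * D s' := by
    intro s
    have : ∑ s', P s (πstar s) s' * D s'
        = (∑ s', P s (πstar s) s' * Cπstar s') - ∑ s', P s (πstar s) s' * Cstar s' := by
      rw [← Finset.sum_sub_distrib]; congr 1; ext s'; ring
    simp only [hD]
    rw [this, hCπstar s, hfix s]; ring
  -- maximize |D|
  obtain ⟨s0, _, hmax⟩ := Finset.exists_max_image (Finset.univ : Finset S)
    (fun s => |D s|) Finset.univ_nonempty
  have hM : |D s0| ≤ δ * |D s0| := by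
    calc |D s0| = |δ * ∑ s', P s0 (πstar s0) s' * D s'| := by rw [hDeq s0]
    _ = δ * |∑ s', P s0 (πstar s0) s' * D s'| := by
        rw [abs_mul, abs_of_nonneg hδ0]
    _ ≤ δ * ∑ s', |P s0 (πstar s0) s' * D s'| := by
        apply mul_le_mul_of_nonneg_left (Finset.abs_sum_le_sum_abs _ _) hδ0
    _ ≤ δ * ∑ s', P s0 (πstar s0) s' * |D s0| := by
        apply mul_le_mul_of_nonneg_left _ hδ0
        apply Finset.sum_le_sum
        intro s' _
        rw [abs_mul, abs_of_nonneg (hP0 _ _ _)]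
        exact mul_le_mul_of_nonneg_left (hmax s' (Finset.mem_univ s')) (hP0 _ _ _)
    _ = δ * |D s0| := by rw [← Finset.sum_mul, hP1, one_mul]
  have h0 : |D s0| ≤ 0 := by nlinarith [abs_nonneg (D s0)]
  have hD0 : ∀ s, D s = 0 := by
    intro s
    have := le_trans (hmax s (Finset.mem_univ s)) h0
    exact abs_eq_zero.mp (le_antisymm this (abs_nonneg _))
  funext s
  have := hD0 s
  simp only [hD] at this
  linarith
end

section
/- Let S, S̃, A be finite nonempty sets, f : S × A → S̃, P̃ a transition kernel from S̃ to S, c : S × A → ℝ, δ ∈ [0,1), and define the MDP transition kernel P(s'|s,a) = P̃(s'|f(s,a)). Let V* : S̃ → ℝ be the unique fixed point of the post-decision Bellman operator (T̃ V)(s̃) = Σ_{s'∈S} P̃(s'|s̃) min_{a∈A} ( c(s',a) + δ V(f(s',a)) ), and define C*(s) = min_{a∈A} ( c(s,a) + δ V*(f(s,a)) ). Then C* is the unique fixed point of the ordinary Bellman operator (T C)(s) = min_{a∈A} ( c(s,a) + δ Σ_{s'∈S} P(s'|s,a) C(s') ), and moreover V*(s̃) = Σ_{s'∈S} P̃(s'|s̃)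 C*(s') for all s̃ ∈ S̃. -/
open Finset

lemma inf'_abs_sub_le {A : Type*} [Fintype A] [Nonempty A]
    (F G : A → ℝ) (K : ℝ) (h : ∀ a, |F a - G a| ≤ K) :
    |univ.inf' univ_nonempty F - univ.inf' univ_nonempty G| ≤ K := by
  rw [abs_sub_le_iff]
  constructor
  · obtain ⟨a, _, ha⟩ := Finset.exists_mem_eq_inf' (univ_nonempty) G
    have h1 : univ.inf' univ_nonempty F ≤ F a := Finset.inf'_le _ (mem_univ a)
    have h2 : F a - G a ≤ K := (abs_le.mp (h a)).2
    rw [ha]; linarith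
  · obtain ⟨a, _, ha⟩ := Finset.exists_mem_eq_inf' (univ_nonempty) F
    have h1 : univ.inf' univ_nonempty G ≤ G a := Finset.inf'_le _ (mem_univ a)
    have h2 : -(F a - G a) ≤ K := (abs_le.mp (h a)).1 |> neg_le.mp |> fun _ => by
      have := (abs_le.mp (h a)).1; linarith
    rw [ha]; linarith

/-- If `V*` is the unique fixed point of the post-decision
Bellman operator and `C*(s) = min_a ( c(s,a) + δ V*(f(s,a)) )`, then `C*` is
the unique fixed point of the ordinary Bellman operator for the factored
kernel `P(s'|s,a) = P̃(s'|f(s,a))`, and `V*(st) = Σ_{s'} P̃(s'|st) C*(s')`. -/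
theorem pds_value_function_gives_optimal_value
    {S Spds A : Type*} [Fintype S] [Fintype Spds] [Fintype A]
    [Nonempty S] [Nonempty Spds] [Nonempty A]
    (f : S → A → Spds)
    (Pt : Spds → S → ℝ)
    (hPt0 : ∀ st s', 0 ≤ Pt st s')
    (hPt1 : ∀ st, ∑ s', Pt st s' = 1)
    (c : S → A → ℝ) (δ : ℝ) (hδ0 : 0 ≤ δ) (hδ1 : δ < 1)
    (P : S → A → S → ℝ)
    (hP : ∀ s a s', P s a s' = Pt (f s a) s')
    (Vstar : Spds → ℝ)
    (hVstar : ∀ st, Vstar st = ∑ s', Pt st s' *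
      univ.inf' univ_nonempty (fun a => c s' a + δ * Vstar (f s' a)))
    (Cstar : S → ℝ)
    (hCstar : ∀ s, Cstar s =
      univ.inf' univ_nonempty (fun a => c s a + δ * Vstar (f s a))) :
    (∀ s, Cstar s =
      univ.inf' univ_nonempty (fun a => c s a + δ * ∑ s', P s a s' * Cstar s')) ∧
    (∀ C : S → ℝ,
      (∀ s, C s =
        univ.inf' univ_nonempty (fun a => c s a + δ * ∑ s', P s a s' * C s')) →
      C = Cstar) ∧
    (∀ st, Vstar st = ∑ s', Pt st s' * Cstar s') := by
  have h3 : ∀ st, Vstar st = ∑ s', Pt st s' * Cstar s' := by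
    intro st; rw [hVstar st]
    exact Finset.sum_congr rfl (fun s' _ => by rw [hCstar s'])
  have h1 : ∀ s, Cstar s =
      univ.inf' univ_nonempty (fun a => c s a + δ * ∑ s', P s a s' * Cstar s') := by
    intro s; rw [hCstar s]
    apply Finset.inf'_congr _ rfl
    intro a _
    rw [h3 (f s a)]
    simp only [hP]
  refine ⟨h1, ?_, h3⟩
  intro C hC
  set D : S → ℝ := fun s => |C s - Cstar s| with hD
  have hne' : (univ : Finset S).Nonempty := univ_nonempty
  set M := univ.sup' hne' D with hM
  have hM0 : 0 ≤ M :=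
    le_trans (abs_nonneg _) (Finset.le_sup' D (mem_univ (Classical.arbitrary S)))
  have hPsum : ∀ s a, ∑ s', P s a s' = 1 := by
    intro s a; simp only [hP]; exact hPt1 _
  have key : ∀ s, D s ≤ δ * M := by
    intro s
    have hDs : D s = |univ.inf' univ_nonempty
        (fun a => c s a + δ * ∑ s', P s a s' * C s') -
        univ.inf' univ_nonempty
        (fun a => c s a + δ * ∑ s', P s a s' * Cstar s')| := by
      rw [hD]; rw [← hC s, ← h1 s]
    rw [hDs]
    apply inf'_abs_sub_le
    intro a
    have : (c s a + δ * ∑ s', P s a s' * C s') -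
        (c s a + δ * ∑ s', P s a s' * Cstar s')
        = δ * ∑ s', (P s a s' * C s' - P s a s' * Cstar s') := by
      rw [Finset.sum_sub_distrib]; ring
    rw [this, abs_mul, abs_of_nonneg hδ0]
    apply mul_le_mul_of_nonneg_left _ hδ0
    calc |∑ s', (P s a s' * C s' - P s a s' * Cstar s')|
        ≤ ∑ s', |P s a s' * C s' - P s a s' * Cstar s'| :=
          Finset.abs_sum_le_sum_abs _ _
      _ = ∑ s', P s a s' * D s' := by
          apply Finset.sum_congr rfl; intro s' _
          rw [← mul_sub, abs_mul, abs_of_nonneg (by rw [hP]; exact hPt0 _ _)]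
      _ ≤ ∑ s', P s a s' * M := by
          apply Finset.sum_le_sum; intro s' _
          exact mul_le_mul_of_nonneg_left (Finset.le_sup' D (mem_univ s'))
            (by rw [hP]; exact hPt0 _ _)
      _ = M := by rw [← Finset.sum_mul, hPsum, one_mul]
  have hMle : M ≤ δ * M := by
    rw [hM]
    exact Finset.sup'_le _ _ (fun s _ => key s)
  have hMz : M = 0 := by nlinarith
  funext s
  have h1' : D s ≤ M := Finset.le_sup' D (mem_univ s)
  have h2' : 0 ≤ D s := abs_nonneg _
  have : D s = 0 := le_antisymm (hMz ▸ h1') h2'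
  have := abs_eq_zero.mp this
  linarith
end

section
/- Let S, S̃, A be finite nonempty sets, f : S × A → S̃, P̃ a transition kernel from S̃ to S, c : S × A → ℝ, and δ ∈ [0,1). Conversely to the previous correspondence: if C* : S → ℝ is the unique fixed point of the Bellman operator for the factored kernel P(s'|s,a) = P̃(s'|f(s,a)), then the function V : S̃ → ℝ defined by V(s̃) = Σ_{s'∈S} P̃(s'|s̃) C*(s') is the unique fixed point of the post-decision Bellman operator (T̃ V)(s̃) = Σ_{s'∈S} P̃(s'|s̃) min_{a∈A} ( c(s',a) + δ V(f(s',a)) ). -/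
open Finset

lemma inf'_sub_inf'_le_of_forall {A : Type*} [Fintype A] [Nonempty A]
    (g h : A → ℝ) (B : ℝ) (hB : ∀ a, |g a - h a| ≤ B) :
    |univ.inf' univ_nonempty g - univ.inf' univ_nonempty h| ≤ B := by
  rw [abs_le]
  constructor
  · obtain ⟨a, _, ha⟩ := Finset.exists_mem_eq_inf' (univ_nonempty) g
    have h1 : univ.inf' univ_nonempty h ≤ h a := Finset.inf'_le _ (mem_univ a)
    have h2 := hB a
    rw [abs_le] at h2
    linarith [ha]
  · obtain ⟨a, _, ha⟩ := Finset.exists_mem_eq_inf' (univ_nonempty) h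
    have h1 : univ.inf' univ_nonempty g ≤ g a := Finset.inf'_le _ (mem_univ a)
    have h2 := hB a
    rw [abs_le] at h2
    linarith [ha]

/-- Conversely, if `C*` is the unique fixed point of the Bellman
operator for the factored kernel `P(s'|s,a) = P̃(s'|f(s,a))`, then
`V(st) = Σ_{s'} P̃(s'|st) C*(s')` is the unique fixed point of the
post-decision Bellman operator. -/
theorem optimal_value_gives_pds_value_function
    {S Spds A : Type*} [Fintype S] [Fintype Spds] [Fintype A]
    [Nonempty S] [Nonempty Spds] [Nonempty A]
    (f : S → A → Spds)
    (Pt : Spds → S → ℝ)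
    (hPt0 : ∀ st s', 0 ≤ Pt st s')
    (hPt1 : ∀ st, ∑ s', Pt st s' = 1)
    (c : S → A → ℝ) (δ : ℝ) (hδ0 : 0 ≤ δ) (hδ1 : δ < 1)
    (P : S → A → S → ℝ)
    (hP : ∀ s a s', P s a s' = Pt (f s a) s')
    (Cstar : S → ℝ)
    (hCstar : ∀ s, Cstar s =
      univ.inf' univ_nonempty (fun a => c s a + δ * ∑ s', P s a s' * Cstar s'))
    (V : Spds → ℝ)
    (hV : ∀ st, V st = ∑ s', Pt st s' * Cstar s') :
    (∀ st, V st = ∑ s', Pt st s' *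
      univ.inf' univ_nonempty (fun a => c s' a + δ * V (f s' a))) ∧
    (∀ W : Spds → ℝ,
      (∀ st, W st = ∑ s', Pt st s' *
        univ.inf' univ_nonempty (fun a => c s' a + δ * W (f s' a))) →
      W = V) := by
  have hfix : ∀ st, V st = ∑ s', Pt st s' *
      univ.inf' univ_nonempty (fun a => c s' a + δ * V (f s' a)) := by
    intro st
    rw [hV]
    refine Finset.sum_congr rfl fun s' _ => ?_
    rw [hCstar s']
    congr 1
    apply Finset.inf'_congr _ rfl
    intro a _
    rw [hV]
    simp only [hP]
  refine ⟨hfix, fun W hW => ?_⟩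
  by_contra hne
  set M : ℝ := univ.sup' univ_nonempty (fun st => |W st - V st|) with hM
  have hMpos : 0 < M := by
    have : ∃ st, W st ≠ V st := by
      by_contra h; push_neg at h; exact hne (funext h)
    obtain ⟨st, hst⟩ := this
    have : 0 < |W st - V st| := abs_pos.mpr (sub_ne_zero.mpr hst)
    refine lt_of_lt_of_le this ?_
    rw [hM]
    exact Finset.le_sup' (fun st => |W st - V st|) (mem_univ st)
  have hMle : ∀ st, |W st - V st| ≤ δ * M := by
    intro st
    rw [hW st, hfix st, ← Finset.sum_sub_distrib]
    calc |∑ s', (Pt st s' * univ.inf' univ_nonempty (fun a => c s' a + δ * W (f s' a))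
            - Pt st s' * univ.inf' univ_nonempty (fun a => c s' a + δ * V (f s' a)))|
        ≤ ∑ s', |Pt st s' * univ.inf' univ_nonempty (fun a => c s' a + δ * W (f s' a))
            - Pt st s' * univ.inf' univ_nonempty (fun a => c s' a + δ * V (f s' a))| :=
          Finset.abs_sum_le_sum_abs _ _
      _ ≤ ∑ s', Pt st s' * (δ * M) := by
          refine Finset.sum_le_sum fun s' _ => ?_
          rw [← mul_sub, abs_mul, abs_of_nonneg (hPt0 st s')]
          refine mul_le_mul_of_nonneg_left ?_ (hPt0 st s')
          refine inf'_sub_inf'_le_of_forall _ _ _ fun a => ?_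
          have : (c s' a + δ * W (f s' a)) - (c s' a + δ * V (f s' a))
              = δ * (W (f s' a) - V (f s' a)) := by ring
          rw [this, abs_mul, abs_of_nonneg hδ0]
          exact mul_le_mul_of_nonneg_left
            (Finset.le_sup' (fun st => |W st - V st|) (mem_univ (f s' a))) hδ0
      _ = δ * M := by rw [← Finset.sum_mul, hPt1, one_mul]
  have : M ≤ δ * M := by
    obtain ⟨st, _, hst⟩ := Finset.exists_mem_eq_sup' univ_nonempty (fun st => |W st - V st|)
    calc M = |W st - V st| := by rw [hM, hst]
      _ ≤ δ * M := hMle st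
  nlinarith
end
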